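/- Let π be an n-profile with g₂ > g₁ (positive gap under mechanism M₂), with fractional weights W₁, W₂ defined as W₂ = Σᵢ max(0, min(g₂, πᵢ) − g₁)/(g₂ − g₁) and W₁ = n − W₂, and served sets S₁, S₂ from the lexicographically first optimal 1-D solution. Then for each ℓ ∈ {1,2}: |S_ℓ| + OPT(π)/(g₂ − g₁) ≥ W_ℓ. -/

import Mathlib

/-!
With `D = g₂ - g₁`, `frac2 π g₁ g₂ i = (clamp(πᵢ, g₁, g₂) - g₁) / D`, so both inequalities follow
from `∑_{i ∈ S₂} max(0, g₂ - πᵢ) ≤ OPT` and its mirror image `∑_{i ∈ S₁} max(0, πᵢ - g₁) ≤ OPT`.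
Comparing `OPT = ∑ max(0, πᵢ - h₂)` with `OPT ≥ ∑ max(0, πᵢ - σ₂)` gives `h₂ ≤ σ₂`, hence
`g₂ ≤ max(σ₂, mean π)`. If `g₂ ≤ σ₂`, every `i ∈ S₂` already pays `|πᵢ - σ₂| ≥ g₂ - πᵢ`. Otherwise
`g₂ ≤ mean π`, and the excess `|S₂| (g₂ - σ₂) ≤ n (g₂ - σ₂) ≤ ∑ max(0, πᵢ - σ₂)` is covered by
what the agents to the right of `σ₂` pay.
-/

open scoped Classical

noncomputable def cost1 {n : ℕ} (π : Fin n → ℝ) (a b : ℝ) : ℝ :=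
  ∑ i, min |π i - a| |π i - b|

def lexLE (p q : ℝ × ℝ) : Prop := p.1 < q.1 ∨ (p.1 = q.1 ∧ p.2 ≤ q.2)

def LexOpt {n : ℕ} (π : Fin n → ℝ) (σ : ℝ × ℝ) : Prop :=
  σ.1 ≤ σ.2 ∧ (∀ a b : ℝ, a ≤ b → cost1 π σ.1 σ.2 ≤ cost1 π a b) ∧
  (∀ a b : ℝ, a ≤ b → cost1 π a b = cost1 π σ.1 σ.2 → lexLE σ (a, b))

/-- fractional weight of agent i toward the right facility -/
noncomputable def frac2 {n : ℕ} (π : Fin n → ℝ) (g1 g2 : ℝ) (i : Fin n) : ℝ :=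
  max 0 (min g2 (π i) - g1) / (g2 - g1)

open Finset

lemma LexOpt.cost_eq {n : ℕ} {π : Fin n → ℝ} {σ : ℝ × ℝ} {C : ℝ} (hσ : LexOpt π σ)
    (hC : IsLeast {c : ℝ | ∃ a b : ℝ, a ≤ b ∧ cost1 π a b = c} C) :
    cost1 π σ.1 σ.2 = C := by
  obtain ⟨a, b, hab, rfl⟩ := hC.1
  exact le_antisymm (hσ.2.1 a b hab) (hC.2 ⟨σ.1, σ.2, hσ.1, rfl⟩)

lemma max_zero_sub_le_min_abs {a b : ℝ} (hab : a ≤ b) (x : ℝ) :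
    max 0 (x - b) ≤ min |x - a| |x - b| :=
  max_le (le_min (abs_nonneg _) (abs_nonneg _))
    (le_min ((by linarith : x - b ≤ x - a).trans (le_abs_self _)) (le_abs_self _))

lemma max_zero_sub_le_min_abs' {a b : ℝ} (hab : a ≤ b) (x : ℝ) :
    max 0 (a - x) ≤ min |x - a| |x - b| :=
  max_le (le_min (abs_nonneg _) (abs_nonneg _))
    (le_min (neg_sub x a ▸ neg_le_abs _)
      ((by linarith : a - x ≤ b - x).trans (neg_sub x b ▸ neg_le_abs _)))

lemma max_zero_sub_add_max_zero_sub (a b : ℝ) : max 0 (a - b) + max 0 (b - a) = |a - b| := by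
  rcases le_total a b with h | h
  · rw [max_eq_left (by linarith), max_eq_right (by linarith), abs_of_nonpos (by linarith)]
    ring
  · rw [max_eq_right (by linarith), max_eq_left (by linarith), abs_of_nonneg (by linarith)]
    ring

section Threshold

variable {ι : Type*} [Fintype ι] (x : ι → ℝ)

lemma le_of_sum_max_zero_sub_le {h s : ℝ} (j : ι) (hj : h ≤ x j)
    (hle : ∑ i, max 0 (x i - s) ≤ ∑ i, max 0 (x i - h)) : h ≤ s := by
  by_contra! hs
  refine hle.not_gt (sum_lt_sum (fun i _ => max_le_max le_rfl (by linarith)) ⟨j, mem_univ _, ?_⟩)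
  rw [max_eq_right (sub_nonneg.mpr hj)]
  exact (by linarith : x j - h < x j - s).trans_le (le_max_right _ _)

lemma le_of_sum_max_zero_sub_le' {h s : ℝ} (j : ι) (hj : x j ≤ h)
    (hle : ∑ i, max 0 (s - x i) ≤ ∑ i, max 0 (h - x i)) : s ≤ h := by
  have := le_of_sum_max_zero_sub_le (fun i => -x i) j (neg_le_neg hj) (s := -s) (h := -h)
    (by simpa only [neg_sub_neg] using hle)
  linarith

lemma card_mul_max_zero_sub_le {s g : ℝ} (hg : g ≤ max s ((∑ i, x i) / Fintype.card ι)) :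
    Fintype.card ι * max 0 (g - s) ≤ ∑ i, max 0 (x i - s) := by
  have hsum : 0 ≤ ∑ i, max 0 (x i - s) := sum_nonneg fun i _ => le_max_left _ _
  rcases le_or_gt g s with hgs | hsg
  · rwa [max_eq_left (by linarith), mul_zero]
  rcases (Fintype.card ι).eq_zero_or_pos with hι | hι
  · rwa [hι, Nat.cast_zero, zero_mul]
  have hmean : g ≤ (∑ i, x i) / Fintype.card ι := by
    rcases le_max_iff.mp hg with h | h
    · linarith
    · exact h
  calc (Fintype.card ι : ℝ) * max 0 (g - s) = Fintype.card ι * (g - s) := by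
        rw [max_eq_right (by linarith)]
    _ ≤ Fintype.card ι * ((∑ i, x i) / Fintype.card ι - s) := by gcongr
    _ = ∑ i, (x i - s) := by
        rw [sum_sub_distrib, sum_const, card_univ, nsmul_eq_mul, mul_sub,
          mul_div_cancel₀ _ (by positivity)]
    _ ≤ ∑ i, max 0 (x i - s) := sum_le_sum fun i _ => le_max_right _ _

lemma sum_max_zero_sub_le_sum {c : ι → ℝ} (A : Finset ι) {s g : ℝ}
    (hA : ∀ i ∈ A, |x i - s| ≤ c i) (hc : ∀ i, max 0 (x i - s) ≤ c i)
    (hg : g ≤ max s ((∑ i, x i) / Fintype.card ι)) :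
    ∑ i ∈ A, max 0 (g - x i) ≤ ∑ i, c i := by
  have hpoint : ∀ i, max 0 (g - x i) ≤ max 0 (s - x i) + max 0 (g - s) := fun i =>
    max_le (by positivity) (by linarith [le_max_right 0 (s - x i), le_max_right 0 (g - s)])
  have hcard : (A.card : ℝ) ≤ Fintype.card ι := by exact_mod_cast card_le_univ A
  calc ∑ i ∈ A, max 0 (g - x i)
      ≤ ∑ i ∈ A, max 0 (s - x i) + A.card * max 0 (g - s) := by
        simpa only [sum_add_distrib, sum_const, nsmul_eq_mul] using
          sum_le_sum fun i (_ : i ∈ A) => hpoint i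
    _ ≤ ∑ i ∈ A, max 0 (s - x i) + ∑ i, max 0 (x i - s) := by
        gcongr
        exact (mul_le_mul_of_nonneg_right hcard (le_max_left _ _)).trans
          (card_mul_max_zero_sub_le x hg)
    _ = ∑ i ∈ A, |x i - s| + ∑ i ∈ Aᶜ, max 0 (x i - s) := by
        rw [← sum_add_sum_compl A, ← add_assoc, ← sum_add_distrib]
        simp only [add_comm (max 0 (s - _)), max_zero_sub_add_max_zero_sub]
    _ ≤ ∑ i ∈ A, c i + ∑ i ∈ Aᶜ, c i := add_le_add (sum_le_sum hA) (sum_le_sum fun i _ => hc i)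
    _ = ∑ i, c i := sum_add_sum_compl A c

lemma sum_max_zero_sub_le_sum' {c : ι → ℝ} (A : Finset ι) {s g : ℝ}
    (hA : ∀ i ∈ A, |x i - s| ≤ c i) (hc : ∀ i, max 0 (s - x i) ≤ c i)
    (hg : min s ((∑ i, x i) / Fintype.card ι) ≤ g) :
    ∑ i ∈ A, max 0 (x i - g) ≤ ∑ i, c i := by
  have := sum_max_zero_sub_le_sum (fun i => -x i) A (s := -s) (g := -g)
    (fun i hi => by simpa only [neg_sub_neg, abs_sub_comm] using hA i hi)
    (fun i => by simpa only [neg_sub_neg] using hc i)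
    (by rwa [sum_neg_distrib, neg_div, max_neg_neg, neg_le_neg_iff])
  simpa only [neg_sub_neg] using this

end Threshold

section Fractions

variable {n : ℕ} (π : Fin n → ℝ) {g1 g2 : ℝ}

lemma frac2_nonneg (hg : g1 < g2) (i : Fin n) : 0 ≤ frac2 π g1 g2 i :=
  div_nonneg (le_max_left _ _) (sub_pos.mpr hg).le

lemma frac2_le_one (hg : g1 < g2) (i : Fin n) : frac2 π g1 g2 i ≤ 1 := by
  rw [frac2, div_le_one (sub_pos.mpr hg)]
  exact max_le (sub_pos.mpr hg).le (by linarith [min_le_left g2 (π i)])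

lemma frac2_le (hg : g1 < g2) (i : Fin n) :
    frac2 π g1 g2 i ≤ max 0 (π i - g1) / (g2 - g1) := by
  rw [frac2, div_le_div_iff_of_pos_right (sub_pos.mpr hg)]
  exact max_le_max le_rfl (by linarith [min_le_right g2 (π i)])

lemma one_sub_frac2_le (hg : g1 < g2) (i : Fin n) :
    1 - frac2 π g1 g2 i ≤ max 0 (g2 - π i) / (g2 - g1) := by
  rw [frac2, one_sub_div (sub_pos.mpr hg).ne', div_le_div_iff_of_pos_right (sub_pos.mpr hg)]
  rcases le_total g2 (π i) with h | h
  · rw [min_eq_left h, max_eq_right (by linarith)]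
    simp
  · rw [min_eq_right h]
    exact le_max_of_le_right (by linarith [le_max_left 0 (π i - g1), le_max_right 0 (π i - g1)])

lemma sub_sum_frac2_le_card_add_div (hg : g1 < g2) (A : Finset (Fin n)) {C : ℝ}
    (hA : ∑ i ∈ Aᶜ, max 0 (g2 - π i) ≤ C) :
    (n : ℝ) - ∑ i, frac2 π g1 g2 i ≤ A.card + C / (g2 - g1) :=
  calc (n : ℝ) - ∑ i, frac2 π g1 g2 i
      = ∑ i ∈ A, (1 - frac2 π g1 g2 i) + ∑ i ∈ Aᶜ, (1 - frac2 π g1 g2 i) := by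
        rw [sum_add_sum_compl, sum_sub_distrib]
        simp
    _ ≤ ∑ i ∈ A, 1 + ∑ i ∈ Aᶜ, max 0 (g2 - π i) / (g2 - g1) := by
        gcongr with i
        · linarith [frac2_nonneg π hg i]
        · exact one_sub_frac2_le π hg i
    _ ≤ A.card + C / (g2 - g1) := by
        rw [← sum_div, sum_const, nsmul_one]
        gcongr

lemma sum_frac2_le_card_compl_add_div (hg : g1 < g2) (A : Finset (Fin n)) {C : ℝ}
    (hA : ∑ i ∈ A, max 0 (π i - g1) ≤ C) :
    ∑ i, frac2 π g1 g2 i ≤ ((n - A.card : ℕ) : ℝ) + C / (g2 - g1) :=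
  calc ∑ i, frac2 π g1 g2 i = ∑ i ∈ Aᶜ, frac2 π g1 g2 i + ∑ i ∈ A, frac2 π g1 g2 i :=
        (sum_compl_add_sum A _).symm
    _ ≤ ∑ i ∈ Aᶜ, 1 + ∑ i ∈ A, max 0 (π i - g1) / (g2 - g1) := by
        gcongr with i
        · exact frac2_le_one π hg i
        · exact frac2_le π hg i
    _ ≤ ((n - A.card : ℕ) : ℝ) + C / (g2 - g1) := by
        rw [← sum_div, sum_const, nsmul_one, card_compl, Fintype.card_fin]
        gcongr

end Fractions

theorem stmt10 {n : ℕ} (hn : 2 ≤ n) (π : Fin n → ℝ) (C : ℝ)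
    (hC : IsLeast {c : ℝ | ∃ a b : ℝ, a ≤ b ∧ cost1 π a b = c} C)
    (h1 h2 : ℝ)
    (hh1 : π ⟨0, by omega⟩ ≤ h1 ∧ (∑ i, max 0 (h1 - π i)) = C)
    (hh2 : h2 ≤ π ⟨n - 1, by omega⟩ ∧ (∑ i, max 0 (π i - h2)) = C)
    (g1 g2 : ℝ) (hg1 : g1 = min h1 ((∑ i, π i) / n)) (hg2 : g2 = max h2 ((∑ i, π i) / n))
    (hgap : g1 < g2)
    (σ : ℝ × ℝ) (hσ : LexOpt π σ) :
    ((Finset.univ.filter (fun i : Fin n => |π i - σ.1| ≤ |π i - σ.2|)).card : ℝ) + C / (g2 - g1)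
      ≥ (n : ℝ) - ∑ i, frac2 π g1 g2 i ∧
    ((n - (Finset.univ.filter (fun i : Fin n => |π i - σ.1| ≤ |π i - σ.2|)).card : ℕ) : ℝ)
      + C / (g2 - g1) ≥ ∑ i, frac2 π g1 g2 i := by
  set S := Finset.univ.filter (fun i : Fin n => |π i - σ.1| ≤ |π i - σ.2|)
  have hcost : ∑ i, min |π i - σ.1| |π i - σ.2| = C := hσ.cost_eq hC
  have hσ2 : h2 ≤ σ.2 := le_of_sum_max_zero_sub_le π _ hh2.1 <| hh2.2 ▸ hcost ▸
    sum_le_sum fun i _ => max_zero_sub_le_min_abs hσ.1 (π i)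
  have hσ1 : σ.1 ≤ h1 := le_of_sum_max_zero_sub_le' π _ hh1.1 <| hh1.2 ▸ hcost ▸
    sum_le_sum fun i _ => max_zero_sub_le_min_abs' hσ.1 (π i)
  have hS : ∀ i, i ∈ S ↔ |π i - σ.1| ≤ |π i - σ.2| := by simp [S]
  have hright : ∑ i ∈ Sᶜ, max 0 (g2 - π i) ≤ C := hcost ▸ sum_max_zero_sub_le_sum π Sᶜ
    (fun i hi => (min_eq_right (le_of_not_ge ((hS i).not.mp (mem_compl.mp hi)))).ge)
    (fun i => max_zero_sub_le_min_abs hσ.1 (π i))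
    (by rw [Fintype.card_fin, hg2]; exact max_le_max hσ2 le_rfl)
  have hleft : ∑ i ∈ S, max 0 (π i - g1) ≤ C := hcost ▸ sum_max_zero_sub_le_sum' π S
    (fun i hi => (min_eq_left ((hS i).mp hi)).ge)
    (fun i => max_zero_sub_le_min_abs' hσ.1 (π i))
    (by rw [Fintype.card_fin, hg1]; exact min_le_min hσ1 le_rfl)
  exact ⟨sub_sum_frac2_le_card_add_div π hgap S hright,
    sum_frac2_le_card_compl_add_div π hgap S hleft⟩
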